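/- Let m be even and, for τ ∈ {−1,+1}^{m/2}, define σ(τ) ∈ {−1,+1}^m by σ_i(τ) = τ_i and σ_{i+m/2}(τ) = −τ_i for 1 ≤ i ≤ m/2. If τ, τ' ∈ {−1,+1}^{m/2} satisfy ρ(τ,τ') = Σ_i |τ_i − τ'_i| = 2, then the squared Hellinger distance between the n-fold product measures satisfies H²(P_{σ(τ)}^{⊗n}, P_{σ(τ')}^{⊗n}) ≤ 4nδ²/m. -/

import Mathlib

/-! For product densities the Hellinger affinity `A = ∫ √(f g)` is multiplicative, so
`H²(f^⊗n, g^⊗n) = 2 - 2 Aⁿ ≤ n (2 - 2 A) = n H²(f, g)` by Bernoulli's inequality.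
For one factor, the bumps attached to different indices `i` have disjoint supports (the centres
are `6Δ` apart), so `H²(P_σ, P_σ') = 2 ∑ᵢ (√aᵢ - √bᵢ)²` with `aᵢ = (1 + σᵢ δ) / (2m)`. Only the two
indices where `σ(τ)` and `σ(τ')` differ contribute, each at most `δ² / m`, because
`(√(1 + δ) - √(1 - δ))² = 2 - 2 √(1 - δ²) ≤ 2 δ²`. -/

open MeasureTheory Metric
open scoped Classical

noncomputable section

/-- normalization constant of the cone-shaped density of radius `ρ` on `ℝ^d`. -/
def coneNorm (d : ℕ) (ρ : ℝ) : ℝ :=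
  ∫ y : EuclideanSpace ℝ (Fin d), max (ρ - ‖y‖) 0

/-- the density of the distribution `P_σ`: mass `(1+σ_i δ)/(2m)` on each of the
balls `U_i = B(z_i,ρ)` and `U'_i = B(z_i+w_i,ρ)`, with cone-shaped profile. -/
def Pdens {m d : ℕ} (z w : Fin m → EuclideanSpace ℝ (Fin d)) (ρ δ : ℝ)
    (σ : Fin m → ℝ) (x : EuclideanSpace ℝ (Fin d)) : ℝ :=
  ∑ i, ((1 + σ i * δ) / (2 * m)) *
    ((max (ρ - ‖x - z i‖) 0 + max (ρ - ‖x - (z i + w i)‖) 0) / coneNorm d ρ)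

/-- the distribution `P_σ`. -/
def Pmeas {m d : ℕ} (z w : Fin m → EuclideanSpace ℝ (Fin d)) (ρ δ : ℝ)
    (σ : Fin m → ℝ) : Measure (EuclideanSpace ℝ (Fin d)) :=
  MeasureTheory.volume.withDensity (fun x => ENNReal.ofReal (Pdens z w ρ δ σ x))

/-- the quantizer `Q_σ`: on `U_i ∪ U'_i` it maps to `z_i + w_i/2` if `σ_i = −1`,
and to `z_i` on `U_i`, `z_i + w_i` on `U'_i`, if `σ_i = +1`. -/
def Qquant {m d : ℕ} (z w : Fin m → EuclideanSpace ℝ (Fin d)) (ρ : ℝ)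
    (σ : Fin m → ℝ) (x : EuclideanSpace ℝ (Fin d)) : EuclideanSpace ℝ (Fin d) :=
  if h : ∃ i, x ∈ closedBall (z i) ρ ∨ x ∈ closedBall (z i + w i) ρ then
    (if σ h.choose = -1 then z h.choose + (2 : ℝ)⁻¹ • w h.choose
     else if x ∈ closedBall (z h.choose) ρ then z h.choose
     else z h.choose + w h.choose)
  else 0

/-- the distortion of a quantizer `Q` under the source distribution `P`. -/
def Rquant {d : ℕ} (Q : EuclideanSpace ℝ (Fin d) → EuclideanSpace ℝ (Fin d))
    (P : Measure (EuclideanSpace ℝ (Fin d))) : ℝ :=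
  ∫ x, ‖x - Q x‖ ^ 2 ∂P

/-- `σ(τ)`: the first `m/2` coordinates equal `τ`, the last `m/2` equal `−τ`. -/
def sigmaOf {m' : ℕ} (τ : Fin m' → ℝ) : Fin (2 * m') → ℝ := fun i =>
  if h : (i : ℕ) < m' then τ ⟨i, h⟩
  else -τ ⟨(i : ℕ) - m', by have := i.isLt; omega⟩

section Hellinger

variable {α : Type*} [MeasurableSpace α] {μ : Measure α} {f g : α → ℝ}

lemma integrable_sqrt_mul (hf : Integrable f μ) (hg : Integrable g μ) (hf0 : 0 ≤ f)
    (hg0 : 0 ≤ g) : Integrable (fun x => √(f x * g x)) μ := by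
  refine ((hf.add hg).div_const 2).mono'
    (Real.continuous_sqrt.comp_aestronglyMeasurable (hf.1.mul hg.1)) (ae_of_all _ fun x => ?_)
  rw [Real.norm_of_nonneg (Real.sqrt_nonneg _), Real.sqrt_le_iff]
  constructor
  · exact div_nonneg (add_nonneg (hf0 x) (hg0 x)) zero_le_two
  · simp only [Pi.add_apply]
    nlinarith [sq_nonneg (f x - g x)]

lemma integral_sq_sqrt_sub_sqrt (hf : Integrable f μ) (hg : Integrable g μ) (hf0 : 0 ≤ f)
    (hg0 : 0 ≤ g) :
    ∫ x, (√(f x) - √(g x)) ^ 2 ∂μ = ∫ x, f x ∂μ + ∫ x, g x ∂μ - 2 * ∫ x, √(f x * g x) ∂μ := by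
  have hpt : ∀ x, (√(f x) - √(g x)) ^ 2 = f x + g x - 2 * √(f x * g x) := fun x => by
    rw [sub_sq, Real.sq_sqrt (hf0 x), Real.sq_sqrt (hg0 x), Real.sqrt_mul (hf0 x)]
    ring
  simp_rw [hpt]
  rw [integral_sub (f := fun x => f x + g x) (hf.add hg)
      ((integrable_sqrt_mul hf hg hf0 hg0).const_mul 2), integral_add hf hg, integral_const_mul]

theorem integral_pi_sq_sqrt_prod_sub_le [SigmaFinite μ] {ι : Type*} [Fintype ι]
    (hf : Integrable f μ) (hg : Integrable g μ) (hf0 : 0 ≤ f) (hg0 : 0 ≤ g)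
    (hf1 : ∫ x, f x ∂μ = 1) (hg1 : ∫ x, g x ∂μ = 1) :
    ∫ xs, (√(∏ j, f (xs j)) - √(∏ j, g (xs j))) ^ 2 ∂(Measure.pi fun _ : ι => μ) ≤
      Fintype.card ι * ∫ x, (√(f x) - √(g x)) ^ 2 ∂μ := by
  have hone : ∫ x, (√(f x) - √(g x)) ^ 2 ∂μ = 2 - 2 * ∫ x, √(f x * g x) ∂μ := by
    rw [integral_sq_sqrt_sub_sqrt hf hg hf0 hg0, hf1, hg1, one_add_one_eq_two]
  have hprod : ∫ xs, (√(∏ j, f (xs j)) - √(∏ j, g (xs j))) ^ 2 ∂(Measure.pi fun _ : ι => μ) =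
      2 - 2 * (∫ x, √(f x * g x) ∂μ) ^ Fintype.card ι := by
    rw [integral_sq_sqrt_sub_sqrt (Integrable.fintype_prod fun _ => hf)
      (Integrable.fintype_prod fun _ => hg) (fun _ => Finset.prod_nonneg fun _ _ => hf0 _)
      (fun _ => Finset.prod_nonneg fun _ _ => hg0 _)]
    simp_rw [← Finset.prod_mul_distrib,
      Real.sqrt_prod _ fun j _ => mul_nonneg (hf0 _) (hg0 _)]
    rw [integral_fintype_prod_eq_pow f, integral_fintype_prod_eq_pow g,
      integral_fintype_prod_eq_pow (fun y => √(f y * g y)), hf1, hg1, one_pow, one_add_one_eq_two]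
  have hA0 : 0 ≤ ∫ x, √(f x * g x) ∂μ := integral_nonneg fun x => Real.sqrt_nonneg _
  have hH : 0 ≤ ∫ x, (√(f x) - √(g x)) ^ 2 ∂μ := integral_nonneg fun x => sq_nonneg _
  have bernoulli :=
    one_add_mul_le_pow (a := ∫ x, √(f x * g x) ∂μ - 1) (by linarith) (Fintype.card ι)
  rw [add_sub_cancel] at bernoulli
  rw [hone] at hH
  rw [hprod, hone]
  linarith

end Hellinger

lemma sq_sqrt_sum_sub_sqrt_sum {ι : Type*} [Fintype ι] {a b v : ι → ℝ} (hv0 : 0 ≤ v)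
    (hv : ∀ i j, v i ≠ 0 → v j ≠ 0 → i = j) :
    (√(∑ i, a i * v i) - √(∑ i, b i * v i)) ^ 2 = ∑ i, (√(a i) - √(b i)) ^ 2 * v i := by
  by_cases h : ∃ i, v i ≠ 0
  · obtain ⟨i, hi⟩ := h
    have hsingle : ∀ c : ι → ℝ, ∑ j, c j * v j = c i * v i := fun c =>
      Finset.sum_eq_single i (fun j _ hji => by rw [not_not.mp (mt (hv j i · hi) hji), mul_zero])
        (by simp)
    rw [hsingle, hsingle, hsingle, Real.sqrt_mul' _ (hv0 i), Real.sqrt_mul' _ (hv0 i), ← sub_mul,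
      mul_pow, Real.sq_sqrt (hv0 i)]
  · simp_all

lemma sq_sqrt_one_add_sub_sqrt_one_sub_le {δ : ℝ} (hδ : |δ| ≤ 1) :
    (√(1 + δ) - √(1 - δ)) ^ 2 ≤ 2 * δ ^ 2 := by
  obtain ⟨hδl, hδu⟩ := abs_le.mp hδ
  have h1 : 0 ≤ 1 - δ ^ 2 := by nlinarith
  have h2 : 1 - δ ^ 2 ≤ √(1 - δ ^ 2) := by
    rw [Real.le_sqrt h1 h1]; nlinarith
  rw [sub_sq, Real.sq_sqrt (by linarith), Real.sq_sqrt (by linarith), mul_assoc,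
    ← Real.sqrt_mul (by linarith), show (1 + δ) * (1 - δ) = 1 - δ ^ 2 by ring]
  linarith

lemma sq_sqrt_div_sub_sqrt_div_le {δ N s s' : ℝ} (hδ : |δ| ≤ 1) (hN : 0 ≤ N)
    (hs : s = 1 ∨ s = -1) (hs' : s' = 1 ∨ s' = -1) :
    (√((1 + s * δ) / N) - √((1 + s' * δ) / N)) ^ 2 ≤ δ ^ 2 / N * |s - s'| := by
  rw [Real.sqrt_div' _ hN, Real.sqrt_div' _ hN, ← sub_div, div_pow, Real.sq_sqrt hN,
    div_mul_eq_mul_div, mul_comm]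
  gcongr
  have key := sq_sqrt_one_add_sub_sqrt_one_sub_le hδ
  rcases hs with rfl | rfl <;> rcases hs' with rfl | rfl <;> norm_num
  · simpa [sub_eq_add_neg, mul_comm] using key
  · rw [← neg_sub, neg_sq]; simpa [sub_eq_add_neg, mul_comm] using key

section Cone

variable {d : ℕ}

def pairCone (ρ : ℝ) (a b x : EuclideanSpace ℝ (Fin d)) : ℝ :=
  (max (ρ - ‖x - a‖) 0 + max (ρ - ‖x - b‖) 0) / coneNorm d ρ

lemma integrable_cone (ρ : ℝ) (a : EuclideanSpace ℝ (Fin d)) :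
    Integrable fun x : EuclideanSpace ℝ (Fin d) => max (ρ - ‖x - a‖) 0 := by
  refine Continuous.integrable_of_hasCompactSupport (by fun_prop)
    (HasCompactSupport.intro (isCompact_closedBall a |ρ|) fun x hx => ?_)
  rw [mem_closedBall, dist_eq_norm, not_le] at hx
  exact max_eq_right (by linarith [le_abs_self ρ])

lemma integral_cone (ρ : ℝ) (a : EuclideanSpace ℝ (Fin d)) :
    ∫ x, max (ρ - ‖x - a‖) 0 = coneNorm d ρ :=
  integral_sub_right_eq_self (fun y => max (ρ - ‖y‖) 0) a

lemma coneNorm_nonneg (ρ : ℝ) : 0 ≤ coneNorm d ρ :=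
  integral_nonneg fun _ => le_max_right _ _

lemma coneNorm_pos {ρ : ℝ} (hρ : 0 < ρ) : 0 < coneNorm d ρ := by
  have hint := integrable_cone ρ (0 : EuclideanSpace ℝ (Fin d))
  simp only [sub_zero] at hint
  refine (integral_pos_iff_support_of_nonneg (fun _ => le_max_right _ _) hint).mpr ?_
  refine (measure_ball_pos volume 0 hρ).trans_le (measure_mono fun y hy => ?_)
  rw [mem_ball_zero_iff] at hy
  exact (lt_max_of_lt_left (sub_pos.mpr hy)).ne'

variable {ρ : ℝ} {a b : EuclideanSpace ℝ (Fin d)}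

lemma pairCone_nonneg (x : EuclideanSpace ℝ (Fin d)) : 0 ≤ pairCone ρ a b x :=
  div_nonneg (add_nonneg (le_max_right _ _) (le_max_right _ _)) (coneNorm_nonneg ρ)

lemma integrable_pairCone : Integrable (pairCone ρ a b) :=
  ((integrable_cone ρ a).add (integrable_cone ρ b)).div_const _

lemma integral_pairCone (hρ : 0 < ρ) : ∫ x, pairCone ρ a b x = 2 := by
  simp only [pairCone]
  rw [integral_div, integral_add (integrable_cone ρ a) (integrable_cone ρ b),
    integral_cone, integral_cone, ← two_mul, mul_div_cancel_right₀ _ (coneNorm_pos hρ).ne']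

lemma dist_lt_of_pairCone_ne_zero {x : EuclideanSpace ℝ (Fin d)} (h : pairCone ρ a b x ≠ 0) :
    dist x a < ρ + dist b a := by
  by_contra! hfar
  have ha : ρ - ‖x - a‖ ≤ 0 := by
    rw [← dist_eq_norm]; linarith [dist_nonneg (x := b) (y := a)]
  have hb : ρ - ‖x - b‖ ≤ 0 := by
    rw [← dist_eq_norm]; linarith [dist_triangle x b a]
  exact h (by rw [pairCone, max_eq_right ha, max_eq_right hb, add_zero, zero_div])

end Cone

section Pdens

variable {m d : ℕ} {z w : Fin m → EuclideanSpace ℝ (Fin d)} {ρ δ : ℝ} {σ σ' : Fin m → ℝ}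

lemma Pdens_eq_sum : Pdens z w ρ δ σ =
    fun x => ∑ i, (1 + σ i * δ) / (2 * m) * pairCone ρ (z i) (z i + w i) x := rfl

lemma Pdens_nonneg (hδ : |δ| ≤ 1) (hσ : ∀ i, σ i = 1 ∨ σ i = -1) : 0 ≤ Pdens z w ρ δ σ := by
  intro x
  refine Finset.sum_nonneg fun i _ => mul_nonneg (div_nonneg ?_ (by positivity))
    (pairCone_nonneg x)
  obtain ⟨hδl, hδu⟩ := abs_le.mp hδ
  rcases hσ i with h | h <;> rw [h] <;> linarith

lemma integrable_Pdens : Integrable (Pdens z w ρ δ σ) := by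
  rw [Pdens_eq_sum]
  exact integrable_finsetSum _ fun i _ => integrable_pairCone.const_mul _

lemma integral_Pdens (hm : 0 < m) (hρ : 0 < ρ) (hσ : ∑ i, σ i = 0) :
    ∫ x, Pdens z w ρ δ σ x = 1 := by
  rw [Pdens_eq_sum, integral_finsetSum _ fun i _ => integrable_pairCone.const_mul _]
  simp_rw [integral_const_mul, integral_pairCone hρ, ← Finset.sum_mul, ← Finset.sum_div,
    Finset.sum_add_distrib, ← Finset.sum_mul, hσ, Finset.sum_const, Finset.card_univ,
    Fintype.card_fin, nsmul_eq_mul, zero_mul, add_zero]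
  field_simp

lemma integral_sq_sqrt_Pdens_sub_le (hρ : 0 < ρ)
    (hsep : ∀ i j, i ≠ j → 2 * ρ + ‖w i‖ + ‖w j‖ ≤ dist (z i) (z j)) (hδ : |δ| ≤ 1)
    (hσ : ∀ i, σ i = 1 ∨ σ i = -1) (hσ' : ∀ i, σ' i = 1 ∨ σ' i = -1) :
    ∫ x, (√(Pdens z w ρ δ σ x) - √(Pdens z w ρ δ σ' x)) ^ 2 ≤
      δ ^ 2 / m * ∑ i, |σ i - σ' i| := by
  have hdisj : ∀ x i j, pairCone ρ (z i) (z i + w i) x ≠ 0 →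
      pairCone ρ (z j) (z j + w j) x ≠ 0 → i = j := by
    intro x i j hi hj
    by_contra hij
    have hi := dist_lt_of_pairCone_ne_zero hi
    have hj := dist_lt_of_pairCone_ne_zero hj
    rw [dist_self_add_left] at hi hj
    linarith [hsep i j hij, dist_triangle_left (z i) (z j) x]
  simp_rw [Pdens_eq_sum, sq_sqrt_sum_sub_sqrt_sum (fun _ => pairCone_nonneg _) (hdisj _)]
  rw [integral_finsetSum _ fun i _ => integrable_pairCone.const_mul _]
  simp_rw [integral_const_mul, integral_pairCone hρ, Finset.mul_sum]
  refine Finset.sum_le_sum fun i _ => ?_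
  calc _ ≤ δ ^ 2 / (2 * m) * |σ i - σ' i| * 2 :=
        by gcongr; exact sq_sqrt_div_sub_sqrt_div_le hδ (by positivity) (hσ i) (hσ' i)
    _ = _ := by field_simp

end Pdens

section SigmaOf

variable {m' : ℕ} {τ τ' : Fin m' → ℝ}

lemma sum_sigmaOf (F : ℝ → ℝ → ℝ) (τ τ' : Fin m' → ℝ) :
    ∑ i, F (sigmaOf τ i) (sigmaOf τ' i) = ∑ j, (F (τ j) (τ' j) + F (-τ j) (-τ' j)) := by
  rw [← (finCongr (two_mul m')).symm.sum_comp, Fin.sum_univ_add, ← Finset.sum_add_distrib]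
  simp [sigmaOf]

lemma sum_sigmaOf_eq_zero (τ : Fin m' → ℝ) : ∑ i, sigmaOf τ i = 0 := by
  simpa using sum_sigmaOf (fun s _ => s) τ τ

lemma sum_abs_sigmaOf_sub (τ τ' : Fin m' → ℝ) :
    ∑ i, |sigmaOf τ i - sigmaOf τ' i| = 2 * ∑ j, |τ j - τ' j| := by
  rw [sum_sigmaOf (fun s s' => |s - s'|), Finset.mul_sum]
  refine Finset.sum_congr rfl fun j _ => ?_
  rw [neg_sub_neg, abs_sub_comm (τ' j)]
  ring

lemma sigmaOf_eq_one_or_neg_one (hτ : ∀ j, τ j = 1 ∨ τ j = -1) (i : Fin (2 * m')) :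
    sigmaOf τ i = 1 ∨ sigmaOf τ i = -1 := by
  unfold sigmaOf
  split_ifs
  · exact hτ _
  · rcases hτ ⟨i - m', by omega⟩ with h | h <;> simp [h]

end SigmaOf

theorem stmt16_general (d k m' : ℕ) (hk3 : 3 ≤ k)
    (hm : 3 * (2 * m') = 2 * k)
    (M Δ ρ δ : ℝ) (hM : 0 < M)
    (hΔ : Δ = 5 * M / (32 * ((2 * m' : ℕ) : ℝ) ^ ((1 : ℝ) / d)))
    (hρ : ρ = Δ / 16) (hδ0 : 0 < δ) (hδ : δ ≤ 1 / 3)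
    (z w : Fin (2 * m') → EuclideanSpace ℝ (Fin d))
    (hzsep : ∀ i j, i ≠ j → 6 * Δ ≤ dist (z i) (z j))
    (hw : ∀ i, ‖w i‖ = Δ)
    (τ τ' : Fin m' → ℝ)
    (hτ : ∀ i, τ i = 1 ∨ τ i = -1) (hτ' : ∀ i, τ' i = 1 ∨ τ' i = -1)
    (hρττ' : ∑ i, |τ i - τ' i| = 2)
    (n : ℕ) :
    (∫ xs : Fin n → EuclideanSpace ℝ (Fin d),
        (Real.sqrt (∏ j, Pdens z w ρ δ (sigmaOf τ) (xs j)) -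
          Real.sqrt (∏ j, Pdens z w ρ δ (sigmaOf τ') (xs j))) ^ 2
      ∂(Measure.pi fun _ : Fin n => MeasureTheory.volume)) ≤
      4 * n * δ ^ 2 / (2 * m') := by
  have hm' : 0 < 2 * m' := by omega
  have hΔ0 : 0 < Δ := by
    rw [hΔ]
    have := Real.rpow_pos_of_pos (Nat.cast_pos.mpr hm' : (0 : ℝ) < (2 * m' : ℕ)) (1 / d)
    positivity
  have hρ0 : 0 < ρ := by rw [hρ]; positivity
  have hδ1 : |δ| ≤ 1 := abs_le.mpr ⟨by linarith, by linarith⟩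
  have hsep : ∀ i j, i ≠ j → 2 * ρ + ‖w i‖ + ‖w j‖ ≤ dist (z i) (z j) := fun i j hij => by
    rw [hw, hw]; linarith [hzsep i j hij]
  have hσ := sigmaOf_eq_one_or_neg_one hτ
  have hσ' := sigmaOf_eq_one_or_neg_one hτ'
  calc _ ≤ n * ∫ x, (√(Pdens z w ρ δ (sigmaOf τ) x) - √(Pdens z w ρ δ (sigmaOf τ') x)) ^ 2 := by
        simpa using integral_pi_sq_sqrt_prod_sub_le (ι := Fin n) integrable_Pdens
          integrable_Pdens (Pdens_nonneg hδ1 hσ) (Pdens_nonneg hδ1 hσ')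
          (integral_Pdens hm' hρ0 (sum_sigmaOf_eq_zero τ))
          (integral_Pdens hm' hρ0 (sum_sigmaOf_eq_zero τ'))
    _ ≤ n * (δ ^ 2 / (2 * m' : ℕ) * ∑ i, |sigmaOf τ i - sigmaOf τ' i|) := by
        gcongr
        exact integral_sq_sqrt_Pdens_sub_le hρ0 hsep hδ1 hσ hσ'
    _ = 4 * n * δ ^ 2 / (2 * m') := by
        rw [sum_abs_sigmaOf_sub, hρττ']
        push_cast
        ring

/-- Lemma 4.8: if `ρ(τ,τ') = 2` then the squared Hellinger distance between the
`n`-fold products satisfies `H²(P_{σ(τ)}^{⊗n}, P_{σ(τ')}^{⊗n}) ≤ 4nδ²/m`. -/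
theorem stmt16 (d k m' : ℕ) (hd : 1 ≤ d) (hk3 : 3 ≤ k) (hdvd : 3 ∣ k)
    (hm : 3 * (2 * m') = 2 * k)
    (M Δ ρ δ : ℝ) (hM : 0 < M)
    (hΔ : Δ = 5 * M / (32 * ((2 * m' : ℕ) : ℝ) ^ ((1 : ℝ) / d)))
    (hρ : ρ = Δ / 16) (hδ0 : 0 < δ) (hδ : δ ≤ 1 / 3)
    (z w : Fin (2 * m') → EuclideanSpace ℝ (Fin d))
    (hz : ∀ i, z i ∈ closedBall (0 : EuclideanSpace ℝ (Fin d)) (M - ρ))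
    (hzsep : ∀ i j, i ≠ j → 6 * Δ ≤ dist (z i) (z j))
    (hw : ∀ i, ‖w i‖ = Δ)
    (hU : ∀ i, closedBall (z i) ρ ⊆ closedBall (0 : EuclideanSpace ℝ (Fin d)) M ∧
      closedBall (z i + w i) ρ ⊆ closedBall (0 : EuclideanSpace ℝ (Fin d)) M)
    (τ τ' : Fin m' → ℝ)
    (hτ : ∀ i, τ i = 1 ∨ τ i = -1) (hτ' : ∀ i, τ' i = 1 ∨ τ' i = -1)
    (hρττ' : ∑ i, |τ i - τ' i| = 2)
    (n : ℕ) (hn : 0 < n) :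
    (∫ xs : Fin n → EuclideanSpace ℝ (Fin d),
        (Real.sqrt (∏ j, Pdens z w ρ δ (sigmaOf τ) (xs j)) -
          Real.sqrt (∏ j, Pdens z w ρ δ (sigmaOf τ') (xs j))) ^ 2
      ∂(Measure.pi fun _ : Fin n => MeasureTheory.volume)) ≤
      4 * n * δ ^ 2 / (2 * m') :=
  stmt16_general d k m' hk3 hm M Δ ρ δ hM hΔ hρ hδ0 hδ z w hzsep hw τ τ' hτ hτ' hρττ' n

end
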